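/- Let m₁ > 0 be the unique positive real solution of e^{m₁} = 1 + 2 m₁ and set R' = 1 − e^{−m₁}. Fix a real R with R' < R < 1, and for each integer b ≥ 1 let m(b) be the unique positive real with P(b, m(b)) = R, where P(b, m) = (1/(b−1)!) ∫₀^m t^{b−1} e^{−t} dt. Then the sequence b ↦ m(b)/b is nonincreasing: for all integers 1 ≤ b ≤ b', m(b)/b ≥ m(b')/b'. In particular, for every task size s the minimum of m(b)/b over 1 ≤ b ≤ s is attained at b = s, i.e., the maximum batch size is optimal whenever R > R'. -/

import Mathlib

/-- The regularized lower incomplete gamma function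
`P (b, m) = (1/(b-1)!) ∫₀^m t^(b-1) e^(-t) dt` for integer shape `b ≥ 1`. -/
noncomputable def regIncGamma (b : ℕ) (m : ℝ) : ℝ :=
  (1 / (Nat.factorial (b - 1) : ℝ)) * ∫ t in (0:ℝ)..m, t ^ (b - 1) * Real.exp (-t)

/-!
With `x = m(b)/b`, the recurrence `P(b+1, y) = P(b, y) - y^b e^{-y}/b!` shows that
`P(b+1, (b+1)x) - P(b, bx)` has the sign of `∫_{bx}^{(b+1)x} t^b e^{-t} dt - (bx)^b e^{-bx}`, so
`m(b+1) ≤ (b+1) x` as soon as this integral is at least `(bx)^b e^{-bx}`.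

The hypothesis `R > 1 - e^{-m₁}` bounds `x` from below: `x > m₁` for `b = 1`, `x > 1.18` for
`b = 2`, and `bx > b + 0.52` for `b ≥ 3`, because `b ↦ P(b, b + a)` is nonincreasing (the density
`t^b e^{-t}` decreases beyond `b`). For `x ≥ m₁`, Bernoulli's inequality
`(1 + s/(bx))^b ≥ 1 + s/x` reduces the integral bound to `e^x ≥ 1 + 2x`, which is where `m₁` comes
from. For `1 < x ≤ 1.26` the sharper `(1 + v)^b ≥ (1 - b v^2/2) e^{bv}` and a fourth-order Taylor
bound for `e^{-x}` do it, and `b = 2` is checked on the closed form of `P(3, ·)`.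
-/

open Real intervalIntegral Nat

lemma continuous_pow_mul_exp_neg (n : ℕ) : Continuous fun t : ℝ => t ^ n * exp (-t) := by
  fun_prop

lemma regIncGamma_sub (b : ℕ) (y z : ℝ) :
    regIncGamma b z - regIncGamma b y
      = (∫ t in y..z, t ^ (b - 1) * exp (-t)) / (b - 1)! := by
  rw [regIncGamma, regIncGamma, ← mul_sub, integral_interval_sub_left
    ((continuous_pow_mul_exp_neg _).intervalIntegrable _ _)
    ((continuous_pow_mul_exp_neg _).intervalIntegrable _ _)]
  ring

lemma regIncGamma_strictMonoOn (b : ℕ) : StrictMonoOn (regIncGamma b) (Set.Ici 0) := by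
  intro y hy z _ hyz
  have hpos : 0 < ∫ t in y..z, t ^ (b - 1) * exp (-t) :=
    intervalIntegral_pos_of_pos_on ((continuous_pow_mul_exp_neg _).intervalIntegrable _ _)
      (fun t ht => by have : 0 < t := lt_of_le_of_lt hy ht.1; positivity) hyz
  rw [← sub_pos, regIncGamma_sub]
  positivity

lemma regIncGamma_one (x : ℝ) : regIncGamma 1 x = 1 - exp (-x) := by
  simp [regIncGamma, integral_comp_neg]

lemma integral_pow_succ_mul_exp_neg (n : ℕ) (x : ℝ) :
    ∫ t in (0 : ℝ)..x, t ^ (n + 1) * exp (-t)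
      = (n + 1) * (∫ t in (0 : ℝ)..x, t ^ n * exp (-t)) - x ^ (n + 1) * exp (-x) := by
  have hparts := integral_mul_deriv_eq_deriv_mul (a := 0) (b := x)
    (u := fun t : ℝ => t ^ (n + 1)) (u' := fun t => (n + 1 : ℕ) * t ^ n)
    (v := fun t => -exp (-t)) (v' := fun t => exp (-t))
    (fun t _ => hasDerivAt_pow (n + 1) t)
    (fun t _ => by simpa using ((hasDerivAt_neg t).exp).fun_neg)
    (Continuous.intervalIntegrable (by fun_prop) _ _)
    (Continuous.intervalIntegrable (by fun_prop) _ _)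
  simp only [mul_neg, integral_neg, mul_assoc, integral_const_mul] at hparts
  rw [hparts, zero_pow (succ_ne_zero n)]
  push_cast
  ring

lemma regIncGamma_succ {b : ℕ} (hb : 1 ≤ b) (x : ℝ) :
    regIncGamma (b + 1) x = regIncGamma b x - x ^ b * exp (-x) / b ! := by
  obtain ⟨n, rfl⟩ : ∃ n, b = n + 1 := ⟨b - 1, by omega⟩
  simp only [regIncGamma, add_tsub_cancel_right, integral_pow_succ_mul_exp_neg]
  push_cast [factorial_succ]
  field_simp

lemma regIncGamma_two (x : ℝ) : regIncGamma 2 x = 1 - exp (-x) * (1 + x) := by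
  rw [regIncGamma_succ le_rfl, regIncGamma_one]
  simp only [pow_one, factorial_one, cast_one, div_one]
  ring

lemma regIncGamma_three (x : ℝ) : regIncGamma 3 x = 1 - exp (-x) * (1 + x + x ^ 2 / 2) := by
  rw [regIncGamma_succ (by norm_num), regIncGamma_two]
  simp only [factorial_two, cast_ofNat]
  ring

lemma regIncGamma_succ_sub {b : ℕ} (hb : 1 ≤ b) (y z : ℝ) :
    regIncGamma (b + 1) z - regIncGamma b y
      = ((∫ t in y..z, t ^ b * exp (-t)) - y ^ b * exp (-y)) / b ! := by
  have := regIncGamma_sub (b + 1) y z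
  rw [regIncGamma_succ hb y] at this
  simp only [add_tsub_cancel_right] at this
  linear_combination this

lemma pow_mul_exp_neg_antitoneOn (n : ℕ) :
    AntitoneOn (fun t : ℝ => t ^ n * exp (-t)) (Set.Ici n) := by
  intro x hx t _ hxt
  simp only [Set.mem_Ici] at hx
  rcases n.eq_zero_or_pos with rfl | hn
  · simpa using exp_le_exp.2 (neg_le_neg hxt)
  have hx0 : 0 < x := lt_of_lt_of_le (by exact_mod_cast hn) hx
  have hpow : (t / x) ^ n ≤ exp (t - x) := by
    calc (t / x) ^ n ≤ exp (t / x - 1) ^ n := by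
          gcongr
          · exact div_nonneg (by linarith) hx0.le
          · linarith [add_one_le_exp (t / x - 1)]
      _ = exp (n * (t / x - 1)) := by rw [← exp_nat_mul]
      _ ≤ exp (t - x) := by
          gcongr
          have : 0 ≤ t / x - 1 := by rw [sub_nonneg, one_le_div hx0]; exact hxt
          calc (n : ℝ) * (t / x - 1) ≤ x * (t / x - 1) := by gcongr
            _ = t - x := by field_simp
  rw [div_pow, div_le_iff₀ (by positivity)] at hpow
  calc t ^ n * exp (-t) ≤ exp (t - x) * x ^ n * exp (-t) := by gcongr
    _ = x ^ n * exp (-x) := by rw [mul_comm (exp _), mul_assoc, ← exp_add]; ring_nf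

lemma regIncGamma_succ_add_one_le {n : ℕ} {x : ℝ} (hn : 1 ≤ n) (hx : n ≤ x) :
    regIncGamma (n + 1) (x + 1) ≤ regIncGamma n x := by
  have hint : ∫ t in x..x + 1, t ^ n * exp (-t) ≤ x ^ n * exp (-x) :=
    calc ∫ t in x..x + 1, t ^ n * exp (-t) ≤ ∫ _ in x..x + 1, x ^ n * exp (-x) :=
          integral_mono_on (by linarith) ((continuous_pow_mul_exp_neg n).intervalIntegrable _ _)
            intervalIntegrable_const
            (fun t ht => pow_mul_exp_neg_antitoneOn n hx (hx.trans ht.1) ht.1)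
      _ = x ^ n * exp (-x) := by simp
  have := regIncGamma_succ_sub hn x (x + 1)
  have : ((∫ t in x..x + 1, t ^ n * exp (-t)) - x ^ n * exp (-x)) / n ! ≤ 0 :=
    div_nonpos_of_nonpos_of_nonneg (by linarith) (by positivity)
  linarith

lemma regIncGamma_nat_add_le {n k : ℕ} {a : ℝ} (ha : 0 ≤ a) (hn : 1 ≤ n) (hnk : n ≤ k) :
    regIncGamma k (k + a) ≤ regIncGamma n (n + a) := by
  induction k, hnk using Nat.le_induction with
  | base => rfl
  | succ k hnk ih =>
    calc regIncGamma (k + 1) (↑(k + 1) + a) = regIncGamma (k + 1) (k + a + 1) := by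
          push_cast; ring_nf
      _ ≤ regIncGamma k (k + a) := regIncGamma_succ_add_one_le (by omega) (by linarith)
      _ ≤ regIncGamma n (n + a) := ih

/-- The ratio of `∫_{bx}^{(b+1)x} t^b e^{-t} dt` to `(bx)^b e^{-bx}`, after substituting
`t = bx + s`. -/
noncomputable def incrementRatio (b : ℕ) (x : ℝ) : ℝ :=
  ∫ s in (0 : ℝ)..x, (1 + s / (b * x)) ^ b * exp (-s)

lemma integral_pow_mul_exp_neg_eq_mul_incrementRatio {b : ℕ} {x : ℝ} (hbx : (b : ℝ) * x ≠ 0) :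
    ∫ t in b * x..b * x + x, t ^ b * exp (-t)
      = (b * x) ^ b * exp (-(b * x)) * incrementRatio b x := by
  rw [incrementRatio, ← integral_const_mul]
  have hshift :=
    integral_comp_add_left (fun t => t ^ b * exp (-t)) ((b : ℝ) * x) (a := 0) (b := x)
  rw [add_zero] at hshift
  rw [← hshift]
  congr 1
  funext s
  have hpow : ((b : ℝ) * x + s) ^ b = (b * x) ^ b * (1 + s / (b * x)) ^ b := by
    rw [← mul_pow, mul_one_add, mul_div_cancel₀ s hbx]
  rw [hpow, neg_add, exp_add]
  ring

lemma regIncGamma_succ_sub_eq_mul_incrementRatio {b : ℕ} {x : ℝ} (hb : 1 ≤ b) (hx : x ≠ 0) :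
    regIncGamma (b + 1) (↑(b + 1) * x) - regIncGamma b (b * x)
      = (b * x) ^ b * exp (-(b * x)) * (incrementRatio b x - 1) / b ! := by
  have hbx : (b : ℝ) * x ≠ 0 := mul_ne_zero (by positivity) hx
  rw [regIncGamma_succ_sub hb, show (↑(b + 1) : ℝ) * x = b * x + x by push_cast; ring,
    integral_pow_mul_exp_neg_eq_mul_incrementRatio hbx]
  ring

lemma regIncGamma_le_succ_of_one_le_incrementRatio {b : ℕ} {x : ℝ} (hb : 1 ≤ b) (hx : 0 < x)
    (h : 1 ≤ incrementRatio b x) :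
    regIncGamma b (b * x) ≤ regIncGamma (b + 1) (↑(b + 1) * x) := by
  have := regIncGamma_succ_sub_eq_mul_incrementRatio hb hx.ne'
  have : 0 ≤ (b * x) ^ b * exp (-(b * x)) * (incrementRatio b x - 1) / b ! := by
    have : 0 ≤ incrementRatio b x - 1 := by linarith
    positivity
  linarith

lemma integral_one_add_div_mul_exp_neg {x : ℝ} (hx : x ≠ 0) :
    ∫ s in (0 : ℝ)..x, (1 + s / x) * exp (-s) = 1 + (1 - (1 + 2 * x) * exp (-x)) / x := by
  have h0 : ∫ s in (0 : ℝ)..x, exp (-s) = 1 - exp (-x) := by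
    simp
  have h1 : ∫ s in (0 : ℝ)..x, s * exp (-s) = 1 - exp (-x) * (1 + x) := by
    simpa [regIncGamma] using regIncGamma_two x
  simp only [add_mul, one_mul, div_mul_eq_mul_div]
  rw [integral_add (Continuous.intervalIntegrable (by fun_prop) _ _)
    (Continuous.intervalIntegrable (by fun_prop) _ _), integral_div, h0, h1]
  field_simp
  ring

lemma one_le_incrementRatio_of_one_add_two_mul_le_exp {b : ℕ} {x : ℝ} (hb : 1 ≤ b) (hx : 0 < x)
    (h : 1 + 2 * x ≤ exp x) : 1 ≤ incrementRatio b x := by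
  have hbx : 0 < (b : ℝ) * x := by positivity
  have hbernoulli : ∀ s ∈ Set.Icc 0 x,
      (1 + s / x) * exp (-s) ≤ (1 + s / (b * x)) ^ b * exp (-s) := by
    intro s hs
    have : 0 ≤ s / (b * x) := div_nonneg hs.1 hbx.le
    gcongr
    calc 1 + s / x = 1 + b * (s / (b * x)) := by field_simp
      _ ≤ (1 + s / (b * x)) ^ b := one_add_mul_le_pow (by linarith) b
  have hmono := integral_mono_on (μ := MeasureTheory.volume) hx.le
    (Continuous.intervalIntegrable (by fun_prop) _ _)
    (Continuous.intervalIntegrable (by fun_prop) _ _) hbernoulli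
  rw [integral_one_add_div_mul_exp_neg hx.ne'] at hmono
  have : (1 + 2 * x) * exp (-x) ≤ 1 := by
    rw [exp_neg, ← div_eq_mul_inv, div_le_one (exp_pos x)]; exact h
  have : 0 ≤ (1 - (1 + 2 * x) * exp (-x)) / x := div_nonneg (by linarith) hx.le
  rw [incrementRatio]
  linarith

lemma abs_exp_neg_sub_taylor_le {v : ℝ} (h0 : 0 ≤ v) (h1 : v ≤ 1) :
    |exp (-v) - (1 - v + v ^ 2 / 2 - v ^ 3 / 6)| ≤ 5 * v ^ 4 / 96 := by
  have h := exp_bound (x := -v) (by rwa [abs_neg, abs_of_nonneg h0]) (n := 4) (by norm_num)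
  norm_num [Finset.sum_range_succ, factorial, abs_of_nonneg h0] at h
  convert h using 2 <;> ring

lemma one_sub_sq_div_two_le_one_add_mul_exp_neg {v : ℝ} (h0 : 0 ≤ v) (h1 : v ≤ 1) :
    1 - v ^ 2 / 2 ≤ (1 + v) * exp (-v) := by
  have h := (abs_le.1 (abs_exp_neg_sub_taylor_le h0 h1)).1
  nlinarith [pow_nonneg h0 3, pow_nonneg h0 4, pow_nonneg h0 5]

lemma one_sub_mul_sq_div_two_mul_exp_le_one_add_pow (b : ℕ) {v : ℝ} (h0 : 0 ≤ v) (h1 : v ≤ 1) :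
    (1 - b * v ^ 2 / 2) * exp (b * v) ≤ (1 + v) ^ b := by
  have hsq : 0 ≤ 1 - v ^ 2 / 2 := by nlinarith
  have key : 1 - b * v ^ 2 / 2 ≤ (1 + v) ^ b * exp (-(b * v)) :=
    calc 1 - b * v ^ 2 / 2 = 1 + b * (-(v ^ 2 / 2)) := by ring
      _ ≤ (1 - v ^ 2 / 2) ^ b := by
          rw [sub_eq_add_neg]; exact one_add_mul_le_pow (by nlinarith) b
      _ ≤ ((1 + v) * exp (-v)) ^ b := by
          gcongr; exact one_sub_sq_div_two_le_one_add_mul_exp_neg h0 h1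
      _ = (1 + v) ^ b * exp (-(b * v)) := by rw [mul_pow, ← exp_nat_mul]; ring_nf
  calc (1 - b * v ^ 2 / 2) * exp (b * v) ≤ (1 + v) ^ b * exp (-(b * v)) * exp (b * v) := by gcongr
    _ = (1 + v) ^ b := by rw [mul_assoc, ← exp_add]; simp

lemma exp_neg_sub_le_one_add_div_pow_mul_exp_neg {b : ℕ} {x s : ℝ} (hb : 1 ≤ b) (hx : 1 ≤ x)
    (hs0 : 0 ≤ s) (hsx : s ≤ x) :
    exp (-(1 - 1 / x) * s) - s ^ 2 / (2 * b * x ^ 2) ≤ (1 + s / (b * x)) ^ b * exp (-s) := by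
  have hbR : (1 : ℝ) ≤ b := by exact_mod_cast hb
  set v := s / (b * x) with hv
  have hv0 : 0 ≤ v := by positivity
  have hv1 : v ≤ 1 := by
    rw [hv, div_le_one (by positivity)]; nlinarith
  have hexp : exp (-(1 - 1 / x) * s) ≤ 1 := by
    rw [exp_le_one_iff]
    have : 0 ≤ 1 - 1 / x := by rw [sub_nonneg, div_le_one (by linarith)]; exact hx
    nlinarith
  have hbv : b * v ^ 2 / 2 = s ^ 2 / (2 * b * x ^ 2) := by rw [hv]; field_simp
  have hexps : exp (b * v) * exp (-s) = exp (-(1 - 1 / x) * s) := by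
    rw [← exp_add, hv]; congr 1; field_simp; ring
  calc exp (-(1 - 1 / x) * s) - s ^ 2 / (2 * b * x ^ 2)
      ≤ (1 - b * v ^ 2 / 2) * exp (-(1 - 1 / x) * s) := by
        rw [← hbv]; nlinarith [show 0 ≤ b * v ^ 2 / 2 by positivity]
    _ = (1 - b * v ^ 2 / 2) * exp (b * v) * exp (-s) := by rw [mul_assoc, hexps]
    _ ≤ (1 + v) ^ b * exp (-s) := by
        gcongr; exact one_sub_mul_sq_div_two_mul_exp_le_one_add_pow b hv0 hv1

lemma integral_exp_neg_mul_sub_sq_div {a d x : ℝ} (ha : a ≠ 0) :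
    ∫ s in (0 : ℝ)..x, (exp (-a * s) - s ^ 2 / d) = (1 - exp (-a * x)) / a - x ^ 3 / (3 * d) := by
  rw [integral_sub (Continuous.intervalIntegrable (by fun_prop) _ _)
    (Continuous.intervalIntegrable (by fun_prop) _ _), integral_div, integral_pow,
    integral_comp_mul_left exp (neg_ne_zero.2 ha), integral_exp]
  simp only [mul_zero, exp_zero, smul_eq_mul]
  field_simp
  ring

lemma one_le_one_add_mul_one_sub_exp_neg_div_sub {b ε : ℝ} (hε0 : 0 < ε) (hε : ε ≤ 0.26)
    (hbε : 0.52 ≤ b * ε) : 1 ≤ (1 + ε) * ((1 - exp (-ε)) / ε - 1 / (6 * b)) := by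
  have hb : 0 < b := by nlinarith
  have hexp := (abs_le.1 (abs_exp_neg_sub_taylor_le hε0.le (by linarith))).2
  have hquot : 1 - ε / 2 + ε ^ 2 / 6 - 5 * ε ^ 3 / 96 ≤ (1 - exp (-ε)) / ε := by
    rw [le_div_iff₀ hε0]; nlinarith
  have hinv : 1 / (6 * b) ≤ 25 * ε / 78 := by
    rw [div_le_iff₀ (by positivity)]; nlinarith
  have hpoly : 1 ≤ (1 + ε) * (1 - ε / 2 + ε ^ 2 / 6 - 5 * ε ^ 3 / 96 - 25 * ε / 78) := by
    nlinarith [mul_nonneg hε0.le (by linarith : (0 : ℝ) ≤ 0.26 - ε),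
      mul_nonneg (pow_nonneg hε0.le 3) (by linarith : (0 : ℝ) ≤ 11 - 5 * ε)]
  calc 1 ≤ (1 + ε) * (1 - ε / 2 + ε ^ 2 / 6 - 5 * ε ^ 3 / 96 - 25 * ε / 78) := hpoly
    _ ≤ (1 + ε) * ((1 - exp (-ε)) / ε - 1 / (6 * b)) := by gcongr

lemma one_le_incrementRatio_of_near_one {b : ℕ} {x : ℝ} (hb : 1 ≤ b) (hx1 : 1 < x)
    (hx : x ≤ 1.26) (hbx : 0.52 ≤ b * (x - 1)) : 1 ≤ incrementRatio b x := by
  have hlower := integral_mono_on (μ := MeasureTheory.volume) (by linarith)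
    (Continuous.intervalIntegrable (by fun_prop) _ _)
    (Continuous.intervalIntegrable (by fun_prop) _ _)
    (fun s hs => exp_neg_sub_le_one_add_div_pow_mul_exp_neg hb hx1.le hs.1 hs.2)
  have ha : 0 < 1 - 1 / x := by rw [sub_pos, div_lt_one (by linarith)]; exact hx1
  rw [integral_exp_neg_mul_sub_sq_div ha.ne'] at hlower
  have hval : (1 - exp (-(1 - 1 / x) * x)) / (1 - 1 / x) - x ^ 3 / (3 * (2 * b * x ^ 2))
      = (1 + (x - 1)) * ((1 - exp (-(x - 1))) / (x - 1) - 1 / (6 * b)) := by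
    have : (x - 1) ≠ 0 := by linarith
    have : x ≠ 0 := by linarith
    have : (b : ℝ) ≠ 0 := by positivity
    rw [show -(1 - 1 / x) * x = -(x - 1) by field_simp]
    field_simp
    ring
  have := one_le_one_add_mul_one_sub_exp_neg_div_sub (b := b) (by linarith : 0 < x - 1)
    (by linarith) hbx
  rw [incrementRatio]
  linarith

lemma regIncGamma_two_le_three {x : ℝ} (hx : 1.18 ≤ x) :
    regIncGamma 2 (2 * x) ≤ regIncGamma 3 (3 * x) := by
  rw [regIncGamma_two, regIncGamma_three]
  have htaylor := sum_le_exp_of_nonneg (by linarith : (0 : ℝ) ≤ x) 6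
  norm_num [Finset.sum_range_succ, factorial] at htaylor
  have hpoly : 1 + 3 * x + 9 * x ^ 2 / 2 ≤ (1 + 2 * x) * exp x := by
    have h0 : (0 : ℝ) ≤ x - 1.18 := by linarith
    nlinarith [mul_le_mul_of_nonneg_left htaylor (by linarith : (0 : ℝ) ≤ 1 + 2 * x),
      pow_nonneg h0 2, pow_nonneg h0 3, pow_nonneg h0 4, pow_nonneg h0 5, pow_nonneg h0 6]
  have hsplit : exp (-(3 * x)) = exp (-(2 * x)) * exp (-x) := by rw [← exp_add]; ring_nf
  have : exp (-x) * (1 + 3 * x + (3 * x) ^ 2 / 2) ≤ 1 + 2 * x := by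
    rw [exp_neg, ← div_eq_inv_mul, div_le_iff₀ (exp_pos x)]; linarith
  rw [hsplit]
  nlinarith [mul_le_mul_of_nonneg_left this (exp_pos (-(2 * x))).le]

lemma exp_one_point_two_five_lt : exp 1.25 < 3.5 := by
  have h := exp_bound' (x := 0.25) (by norm_num) (by norm_num) (n := 3) (by norm_num)
  norm_num [Finset.sum_range_succ, factorial] at h
  calc exp 1.25 = exp 1 * exp 0.25 := by rw [← exp_add]; norm_num
    _ < 2.7182818286 * 1.285 := by
        gcongr
        · exact exp_one_lt_d9
        · linarith
    _ < 3.5 := by norm_num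

lemma lt_exp_one_point_two_six : 3.52 < exp 1.26 := by
  have h := sum_le_exp_of_nonneg (x := 1.26) (by norm_num) 7
  norm_num [Finset.sum_range_succ, factorial] at h
  linarith

section ThresholdRoot

variable {m₁ : ℝ}

lemma one_add_two_mul_le_exp_of_le (hm₁_pos : 0 < m₁) (hm₁ : exp m₁ = 1 + 2 * m₁) {x : ℝ}
    (hx : m₁ ≤ x) : 1 + 2 * x ≤ exp x := by
  -- the tangent line of `exp` at `m₁` has slope `1 + 2 m₁`, at least `2` once `m₁ ≥ 1/2`
  have hhalf : 1 / 2 ≤ m₁ := by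
    have h := add_one_le_exp (-m₁)
    rw [exp_neg, hm₁, ← one_div, le_div_iff₀ (by positivity)] at h
    nlinarith
  have htangent : exp m₁ * (1 + (x - m₁)) ≤ exp x := by
    rw [show exp x = exp m₁ * exp (x - m₁) by rw [← exp_add]; ring_nf]
    gcongr
    linarith [add_one_le_exp (x - m₁)]
  rw [hm₁] at htangent
  nlinarith

lemma one_point_two_five_lt_of_exp_eq (hm₁_pos : 0 < m₁) (hm₁ : exp m₁ = 1 + 2 * m₁) :
    1.25 < m₁ := by
  by_contra! h
  have := one_add_two_mul_le_exp_of_le hm₁_pos hm₁ h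
  linarith [exp_one_point_two_five_lt]

lemma lt_one_point_two_six_of_exp_eq (hm₁_pos : 0 < m₁) (hm₁ : exp m₁ = 1 + 2 * m₁) :
    m₁ < 1.26 := by
  have h125 := one_point_two_five_lt_of_exp_eq hm₁_pos hm₁
  have htangent : exp 1.26 * (1 + (m₁ - 1.26)) ≤ exp m₁ := by
    rw [show exp m₁ = exp 1.26 * exp (m₁ - 1.26) by rw [← exp_add]; ring_nf]
    gcongr
    linarith [add_one_le_exp (m₁ - 1.26)]
  rw [hm₁] at htangent
  nlinarith [lt_exp_one_point_two_six]

end ThresholdRoot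

lemma regIncGamma_two_le_one_sub_exp_neg : regIncGamma 2 2.36 ≤ 1 - exp (-1.25) := by
  have h := exp_bound_div_one_sub_of_interval' (x := 0.11) (by norm_num) (by norm_num)
  have hexp : exp 1.11 ≤ 3.36 :=
    calc exp 1.11 = exp 1 * exp 0.11 := by rw [← exp_add]; norm_num
      _ ≤ 2.7182818286 * (1 / (1 - 0.11)) := by gcongr; exact exp_one_lt_d9.le
      _ ≤ 3.36 := by norm_num
  rw [regIncGamma_two, show exp (-1.25) = exp (-2.36) * exp 1.11 by rw [← exp_add]; norm_num]
  nlinarith [exp_pos (-2.36)]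

lemma regIncGamma_three_le_one_sub_exp_neg : regIncGamma 3 3.52 ≤ 1 - exp (-1.25) := by
  have h := exp_bound_div_one_sub_of_interval' (x := 0.27) (by norm_num) (by norm_num)
  have h2 : exp 2 < 7.39 := by
    rw [show (2 : ℝ) = 1 + 1 by norm_num, exp_add]
    nlinarith [exp_one_lt_d9, exp_pos 1]
  have hexp : exp 2.27 ≤ 10.7 :=
    calc exp 2.27 = exp 2 * exp 0.27 := by rw [← exp_add]; norm_num
      _ ≤ 7.39 * (1 / (1 - 0.27)) := by gcongr
      _ ≤ 10.7 := by norm_num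
  rw [regIncGamma_three, show exp (-1.25) = exp (-3.52) * exp 2.27 by rw [← exp_add]; norm_num]
  nlinarith [exp_pos (-3.52)]

lemma regIncGamma_le_succ_of_one_sub_exp_neg_lt {m₁ x : ℝ} {b : ℕ} (hm₁_pos : 0 < m₁)
    (hm₁ : exp m₁ = 1 + 2 * m₁) (hb : 1 ≤ b) (hx : 0 < x)
    (h : 1 - exp (-m₁) < regIncGamma b (b * x)) :
    regIncGamma b (b * x) ≤ regIncGamma (b + 1) (↑(b + 1) * x) := by
  have h125 := one_point_two_five_lt_of_exp_eq hm₁_pos hm₁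
  have hthreshold : 1 - exp (-1.25) ≤ 1 - exp (-m₁) := by gcongr
  have hlt : ∀ l : ℝ, 0 ≤ l → regIncGamma b l ≤ 1 - exp (-m₁) → l < b * x := fun l hl hP =>
    ((regIncGamma_strictMonoOn b).lt_iff_lt hl (Set.mem_Ici.2 (by positivity))).1 (by linarith)
  obtain rfl | rfl | hb3 : b = 1 ∨ b = 2 ∨ 3 ≤ b := by omega
  · have hx : m₁ < x := by simpa using hlt m₁ hm₁_pos.le (by rw [regIncGamma_one])
    exact regIncGamma_le_succ_of_one_le_incrementRatio le_rfl (by linarith)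
      (one_le_incrementRatio_of_one_add_two_mul_le_exp le_rfl (by linarith)
        (one_add_two_mul_le_exp_of_le hm₁_pos hm₁ hx.le))
  · have hx : 2.36 < 2 * x := by
      simpa using hlt 2.36 (by norm_num) (regIncGamma_two_le_one_sub_exp_neg.trans hthreshold)
    exact_mod_cast regIncGamma_two_le_three (by linarith)
  · have hP : regIncGamma b (b + 0.52) ≤ 1 - exp (-m₁) :=
      calc regIncGamma b (b + 0.52) ≤ regIncGamma 3 (3 + 0.52) :=
            regIncGamma_nat_add_le (by norm_num) (by norm_num) hb3
        _ = regIncGamma 3 3.52 := by norm_num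
        _ ≤ 1 - exp (-m₁) := regIncGamma_three_le_one_sub_exp_neg.trans hthreshold
    have hbx := hlt _ (by positivity) hP
    apply regIncGamma_le_succ_of_one_le_incrementRatio hb hx
    by_cases hx126 : x ≤ 1.26
    · have hb1 : (1 : ℝ) ≤ b := by exact_mod_cast hb
      exact one_le_incrementRatio_of_near_one hb (by nlinarith) hx126 (by linarith)
    · exact one_le_incrementRatio_of_one_add_two_mul_le_exp hb hx
        (one_add_two_mul_le_exp_of_le hm₁_pos hm₁
          (by linarith [lt_one_point_two_six_of_exp_eq hm₁_pos hm₁]))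

theorem max_batch_size_optimal_above_threshold_general
    (m₁ R' : ℝ) (hm₁_pos : 0 < m₁) (hm₁ : Real.exp m₁ = 1 + 2 * m₁)
    (hR' : R' = 1 - Real.exp (-m₁))
    (R : ℝ) (hRlo : R' < R)
    (m : ℕ → ℝ) (hm : ∀ b : ℕ, 1 ≤ b → 0 < m b ∧ regIncGamma b (m b) = R) :
    (∀ b b' : ℕ, 1 ≤ b → b ≤ b' → m b / (b : ℝ) ≥ m b' / (b' : ℝ)) ∧
      ∀ s : ℕ, (hs : 1 ≤ s) →
        (Finset.Icc 1 s).inf' (Finset.nonempty_Icc.mpr hs)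
            (fun b => m b / (b : ℝ)) = m s / (s : ℝ) := by
  have hstep : ∀ b ≥ 1, m (b + 1) / ↑(b + 1) ≤ m b / b := by
    intro b hb
    obtain ⟨hpos, hP⟩ := hm b hb
    obtain ⟨hpos', hP'⟩ := hm (b + 1) (by omega)
    have hbx : (b : ℝ) * (m b / b) = m b := mul_div_cancel₀ _ (by positivity)
    have key := regIncGamma_le_succ_of_one_sub_exp_neg_lt hm₁_pos hm₁ hb (x := m b / b)
      (by positivity) (by rw [hbx, hP, ← hR']; exact hRlo)
    rw [hbx, hP, ← hP'] at key
    rw [div_le_iff₀ (by positivity), mul_comm]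
    exact ((regIncGamma_strictMonoOn (b + 1)).le_iff_le hpos'.le
      (Set.mem_Ici.2 (by positivity))).1 key
  have hanti : AntitoneOn (fun b : ℕ => m b / b) {b | 1 ≤ b} :=
    antitoneOn_nat_Ici_of_succ_le hstep
  have hmono : ∀ b b' : ℕ, 1 ≤ b → b ≤ b' → m b / (b : ℝ) ≥ m b' / (b' : ℝ) :=
    fun b b' hb hbb' => hanti hb (hb.trans hbb') hbb'
  refine ⟨hmono, fun s hs => le_antisymm (Finset.inf'_le _ (by simp [hs])) ?_⟩
  exact Finset.le_inf' _ _ fun b hb => hmono b s (Finset.mem_Icc.1 hb).1 (Finset.mem_Icc.1 hb).2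

/-- For code rates `R` above the threshold `R' = 1 - e^(-m₁)`, where `m₁` is the unique
positive solution of `e^(m₁) = 1 + 2 m₁`, the sequence `b ↦ m(b)/b` of normalized Gamma
quantiles is nonincreasing; in particular, for every task size `s` the minimum of
`m(b)/b` over `1 ≤ b ≤ s` is attained at the maximum batch size `b = s`. -/
theorem max_batch_size_optimal_above_threshold
    (m₁ R' : ℝ) (hm₁_pos : 0 < m₁) (hm₁ : Real.exp m₁ = 1 + 2 * m₁)
    (hR' : R' = 1 - Real.exp (-m₁))
    (R : ℝ) (hRlo : R' < R) (hRhi : R < 1)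
    (m : ℕ → ℝ) (hm : ∀ b : ℕ, 1 ≤ b → 0 < m b ∧ regIncGamma b (m b) = R) :
    (∀ b b' : ℕ, 1 ≤ b → b ≤ b' → m b / (b : ℝ) ≥ m b' / (b' : ℝ)) ∧
      ∀ s : ℕ, (hs : 1 ≤ s) →
        (Finset.Icc 1 s).inf' (Finset.nonempty_Icc.mpr hs)
            (fun b => m b / (b : ℝ)) = m s / (s : ℝ) :=
  max_batch_size_optimal_above_threshold_general m₁ R' hm₁_pos hm₁ hR' R hRlo m hm
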